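/- arXiv:1011.3273 — 2 statements merged into one kernel-verified Lean document; each statement's English description precedes it below -/
import Mathlib

section
/- Let d ≥ 2 be an integer and α ∈ (1, 2). If f : ℝ^d → ℝ is a measurable function belonging to the Kato class K_{d,α-1}, then lim_{t ↓ 0} sup_{x ∈ ℝ^d} ∫_0^t ∫_{ℝ^d} min( s^{-d/α}, s / |x-y|^{d+α} ) · |f(y)| dy ds = 0. -/
open MeasureTheory Metric Set Filter ENNReal

/-- The Kato norm `M^α_f(r) = sup_{x ∈ ℝ^d} ∫_{B(x,r)} |f(y)| / |x-y|^{d+1-α} dy`. -/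
noncomputable def katoM (d : ℕ) (α : ℝ) (f : EuclideanSpace ℝ (Fin d) → ℝ) (r : ℝ) : ℝ≥0∞ :=
  ⨆ x : EuclideanSpace ℝ (Fin d),
    ∫⁻ y in Metric.ball x r, ENNReal.ofReal (|f y| / dist x y ^ ((d : ℝ) + 1 - α))

/-- `f` belongs to the Kato class `K_{d,α-1}` if `M^α_f(r) → 0` as `r ↓ 0`. -/
def KatoClass (d : ℕ) (α : ℝ) (f : EuclideanSpace ℝ (Fin d) → ℝ) : Prop :=
  Filter.Tendsto (katoM d α f) (nhdsWithin 0 (Set.Ioi 0)) (nhds 0)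

open Topology

/-!
Split `∫ p_s(x,y) |f y| dy`, where `p_s(x,y) = min (s^(-d/α)) (s/|x-y|^(d+α))`, at the ball
`B(x,ρ)`. Near `x`, interpolating between the two terms of the minimum gives
`p_s(x,y) ≤ s^(1/α-1) / |x-y|^(d+1-α)`, so this part is at most `s^(1/α-1) M^α_f(ρ)`.
Far from `x`, average `|f y|` over the balls `B(z,ρ)` containing `y`: on such a ball
`p_s(x,y) ≲_ρ s (1+|x-z|)^(-(d+α)) / |z-y|^(d+1-α)`, the ball contributes at most a multiple of
`M^α_f(ρ)`, and `(1+|x-z|)^(-(d+α))` is integrable in `z`; so this part is `O_ρ(s) M^α_f(ρ)`.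
Hence it suffices that `M^α_f(ρ) < ∞` for one `ρ ≤ 1`: the time integral over `(0,t]` of
`s^(1/α-1) + C_ρ s` tends to `0` with `t`.
-/

lemma min_le_rpow_mul_rpow {a b θ : ℝ} (ha : 0 < a) (hb : 0 < b) (hθ₀ : 0 ≤ θ) (hθ₁ : θ ≤ 1) :
    min a b ≤ a ^ θ * b ^ (1 - θ) := by
  have hm : 0 < min a b := lt_min ha hb
  calc min a b = min a b ^ θ * min a b ^ (1 - θ) := by
        rw [← Real.rpow_add hm, add_sub_cancel, Real.rpow_one]
    _ ≤ a ^ θ * b ^ (1 - θ) := by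
        gcongr
        exacts [min_le_left a b, min_le_right a b]

noncomputable def stableKernel (n α s r : ℝ) : ℝ := min (s ^ (-n / α)) (s / r ^ (n + α))

lemma stableKernel_le_div_rpow {n α s r : ℝ} (hα : 1 / 2 < α) (hαn : α ≤ n + 1) (hs : 0 < s)
    (hr : 0 ≤ r) : stableKernel n α s r ≤ s ^ (1 / α - 1) / r ^ (n + 1 - α) := by
  have hq : 0 < n + α := by linarith
  rcases hr.eq_or_lt with rfl | hr
  · rw [stableKernel, Real.zero_rpow hq.ne', _root_.div_zero, min_eq_right (by positivity)]
    positivity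
  -- interpolate with the weight that turns `r ^ (n + α)` into `r ^ (n + 1 - α)`
  set θ := (2 * α - 1) / (n + α) with hθ
  have hθ₀ : 0 ≤ θ := div_nonneg (by linarith) hq.le
  have hθ₁ : θ ≤ 1 := (div_le_one hq).2 (by linarith)
  have hθr : (n + α) * (1 - θ) = n + 1 - α := by rw [hθ]; field_simp; ring
  have hθs : -n / α * θ + (1 - θ) = 1 / α - 1 := by rw [hθ]; field_simp; ring
  calc stableKernel n α s r ≤ (s ^ (-n / α)) ^ θ * (s / r ^ (n + α)) ^ (1 - θ) :=
        min_le_rpow_mul_rpow (by positivity) (by positivity) hθ₀ hθ₁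
    _ = s ^ (1 / α - 1) / r ^ (n + 1 - α) := by
        rw [Real.div_rpow hs.le (by positivity), ← Real.rpow_mul hs.le, ← Real.rpow_mul hr.le,
          hθr, ← hθs, Real.rpow_add hs]
        ring

lemma mul_one_add_dist_le_three_mul_dist {X : Type*} [PseudoMetricSpace X] {x y z : X} {ρ : ℝ}
    (hρ : ρ ≤ 1) (hxy : ρ ≤ dist x y) (hzy : dist z y < ρ) :
    ρ * (1 + dist x z) ≤ 3 * dist x y := by
  have htri : dist x z ≤ dist x y + dist z y := dist_triangle_right x z y
  nlinarith [mul_nonneg (sub_nonneg.2 hρ) (dist_nonneg (x := x) (y := z))]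

lemma div_dist_rpow_mul_le {X : Type*} [PseudoMetricSpace X] {x y z : X} {p q s ρ F : ℝ}
    (hp : 0 ≤ p) (hq : 0 ≤ q) (hs : 0 ≤ s) (hF : 0 ≤ F) (hρ : ρ ≤ 1) (hxy : ρ ≤ dist x y)
    (hzy₀ : 0 < dist z y) (hzy : dist z y < ρ) :
    s / dist x y ^ q * F
      ≤ s * ((3 / ρ) ^ q * ρ ^ p) * (1 + dist x z) ^ (-q) * (F / dist z y ^ p) := by
  have hρ₀ : 0 < ρ := hzy₀.trans hzy
  have hD : 0 < 1 + dist x z := by positivity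
  have hfar : ρ / 3 * (1 + dist x z) ≤ dist x y := by
    linarith [mul_one_add_dist_le_three_mul_dist hρ hxy hzy]
  have hnear : 1 ≤ ρ ^ p / dist z y ^ p :=
    (one_le_div (by positivity)).2 (Real.rpow_le_rpow hzy₀.le hzy.le hp)
  calc s / dist x y ^ q * F ≤ s / (ρ / 3 * (1 + dist x z)) ^ q * (ρ ^ p / dist z y ^ p * F) := by
        gcongr
        exact le_mul_of_one_le_left hF hnear
    _ = s * ((3 / ρ) ^ q * ρ ^ p) * (1 + dist x z) ^ (-q) * (F / dist z y ^ p) := by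
        rw [Real.mul_rpow (by positivity) hD.le, Real.rpow_neg hD.le,
          Real.div_rpow zero_le_three hρ₀.le, Real.div_rpow hρ₀.le zero_le_three]
        field_simp

theorem measure_ball_mul_setLIntegral {E : Type*} [NormedAddCommGroup E] [NormedSpace ℝ E]
    [FiniteDimensional ℝ E] [MeasurableSpace E] [BorelSpace E] (μ : Measure E)
    [μ.IsAddHaarMeasure] {g : E → ℝ≥0∞} (hg : Measurable g) (S : Set E) (ρ : ℝ) :
    μ (ball 0 ρ) * ∫⁻ y in S, g y ∂μ = ∫⁻ z, ∫⁻ y in ball z ρ ∩ S, g y ∂μ ∂μ := by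
  have hmeas :
      Measurable (Function.uncurry fun y z : E => (ball y ρ).indicator (fun _ => g y) z) :=
    (hg.comp measurable_fst).indicator
      (measurableSet_lt (measurable_snd.dist measurable_fst) measurable_const)
  calc μ (ball 0 ρ) * ∫⁻ y in S, g y ∂μ
      = ∫⁻ y in S, ∫⁻ z, (ball y ρ).indicator (fun _ => g y) z ∂μ ∂μ := by
        simp_rw [lintegral_indicator_const measurableSet_ball, Measure.addHaar_ball_center]
        rw [lintegral_mul_const _ hg, mul_comm]
    _ = ∫⁻ z, ∫⁻ y in S, (ball z ρ).indicator g y ∂μ ∂μ := by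
        rw [lintegral_lintegral_swap hmeas.aemeasurable]
        congr! 3 with z y
        simp only [indicator, mem_ball, dist_comm]
    _ = ∫⁻ z, ∫⁻ y in ball z ρ ∩ S, g y ∂μ ∂μ := by
        simp_rw [lintegral_indicator measurableSet_ball,
          Measure.restrict_restrict measurableSet_ball]

noncomputable def farFieldConst (d : ℕ) (α ρ : ℝ) : ℝ≥0∞ :=
  ENNReal.ofReal ((3 / ρ) ^ ((d : ℝ) + α) * ρ ^ ((d : ℝ) + 1 - α)) *
    (∫⁻ w : EuclideanSpace ℝ (Fin d), ENNReal.ofReal ((1 + ‖w‖) ^ (-((d : ℝ) + α)))) /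
    volume (ball (0 : EuclideanSpace ℝ (Fin d)) ρ)

lemma farFieldConst_ne_top {d : ℕ} {α ρ : ℝ} (hα : 0 < α) (hρ : 0 < ρ) :
    farFieldConst d α ρ ≠ ∞ := by
  refine ENNReal.div_ne_top (ENNReal.mul_ne_top ofReal_ne_top
    (finite_integral_one_add_norm ?_).ne) (measure_ball_pos volume _ hρ).ne'
  rw [finrank_euclideanSpace_fin]
  linarith

section

variable {d : ℕ} {α : ℝ} {f : EuclideanSpace ℝ (Fin d) → ℝ}

lemma setLIntegral_ball_le_katoM (x : EuclideanSpace ℝ (Fin d)) (ρ : ℝ) :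
    ∫⁻ y in ball x ρ, ENNReal.ofReal (|f y| / dist x y ^ ((d : ℝ) + 1 - α)) ≤ katoM d α f ρ :=
  le_iSup (fun x : EuclideanSpace ℝ (Fin d) =>
    ∫⁻ y in ball x ρ, ENNReal.ofReal (|f y| / dist x y ^ ((d : ℝ) + 1 - α))) x

lemma setLIntegral_ball_stableKernel_le (hα : 1 / 2 < α) (hαd : α ≤ d + 1) {s : ℝ} (hs : 0 < s)
    (x : EuclideanSpace ℝ (Fin d)) (ρ : ℝ) :
    ∫⁻ y in ball x ρ, ENNReal.ofReal (stableKernel d α s (dist x y) * |f y|)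
      ≤ ENNReal.ofReal (s ^ (1 / α - 1)) * katoM d α f ρ :=
  calc ∫⁻ y in ball x ρ, ENNReal.ofReal (stableKernel d α s (dist x y) * |f y|)
      ≤ ∫⁻ y in ball x ρ, ENNReal.ofReal (s ^ (1 / α - 1)) *
          ENNReal.ofReal (|f y| / dist x y ^ ((d : ℝ) + 1 - α)) := by
        refine lintegral_mono fun y => ?_
        rw [← ENNReal.ofReal_mul (by positivity)]
        refine ENNReal.ofReal_le_ofReal ?_
        calc stableKernel d α s (dist x y) * |f y|
            ≤ s ^ (1 / α - 1) / dist x y ^ ((d : ℝ) + 1 - α) * |f y| := by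
              gcongr
              exact stableKernel_le_div_rpow hα hαd hs dist_nonneg
          _ = s ^ (1 / α - 1) * (|f y| / dist x y ^ ((d : ℝ) + 1 - α)) := by ring
    _ = ENNReal.ofReal (s ^ (1 / α - 1)) *
          ∫⁻ y in ball x ρ, ENNReal.ofReal (|f y| / dist x y ^ ((d : ℝ) + 1 - α)) :=
        lintegral_const_mul' _ _ ofReal_ne_top
    _ ≤ ENNReal.ofReal (s ^ (1 / α - 1)) * katoM d α f ρ := by
        gcongr
        exact setLIntegral_ball_le_katoM x ρ

lemma setLIntegral_ball_inter_compl_ball_le_katoM [NeZero d] (hα₀ : 0 ≤ α) (hαd : α ≤ d + 1)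
    {s ρ : ℝ} (hs : 0 ≤ s) (hρ₁ : ρ ≤ 1) (x z : EuclideanSpace ℝ (Fin d)) :
    ∫⁻ y in ball z ρ ∩ (ball x ρ)ᶜ, ENNReal.ofReal (s / dist x y ^ ((d : ℝ) + α) * |f y|)
      ≤ ENNReal.ofReal (s * ((3 / ρ) ^ ((d : ℝ) + α) * ρ ^ ((d : ℝ) + 1 - α)) *
          (1 + dist x z) ^ (-((d : ℝ) + α))) * katoM d α f ρ := by
  set w := ENNReal.ofReal (s * ((3 / ρ) ^ ((d : ℝ) + α) * ρ ^ ((d : ℝ) + 1 - α)) *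
    (1 + dist x z) ^ (-((d : ℝ) + α)))
  have hbound : ∀ᵐ y ∂volume.restrict (ball z ρ ∩ (ball x ρ)ᶜ),
      ENNReal.ofReal (s / dist x y ^ ((d : ℝ) + α) * |f y|)
        ≤ w * ENNReal.ofReal (|f y| / dist z y ^ ((d : ℝ) + 1 - α)) := by
    filter_upwards [ae_restrict_of_ae (Measure.ae_ne volume z),
      ae_restrict_mem (measurableSet_ball.inter measurableSet_ball.compl)] with y hyz hy
    have hρ₀ : 0 < ρ := dist_nonneg.trans_lt (mem_ball.1 hy.1)
    rw [← ENNReal.ofReal_mul (by positivity)]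
    refine ENNReal.ofReal_le_ofReal (div_dist_rpow_mul_le (by linarith) (by positivity) hs
      (abs_nonneg _) hρ₁ ?_ (dist_pos.2 hyz.symm) ?_)
    · simpa [dist_comm] using hy.2
    · simpa [dist_comm] using hy.1
  calc ∫⁻ y in ball z ρ ∩ (ball x ρ)ᶜ, ENNReal.ofReal (s / dist x y ^ ((d : ℝ) + α) * |f y|)
      ≤ ∫⁻ y in ball z ρ ∩ (ball x ρ)ᶜ,
          w * ENNReal.ofReal (|f y| / dist z y ^ ((d : ℝ) + 1 - α)) :=
        lintegral_mono_ae hbound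
    _ ≤ ∫⁻ y in ball z ρ, w * ENNReal.ofReal (|f y| / dist z y ^ ((d : ℝ) + 1 - α)) :=
        lintegral_mono_set inter_subset_left
    _ = w * ∫⁻ y in ball z ρ, ENNReal.ofReal (|f y| / dist z y ^ ((d : ℝ) + 1 - α)) :=
        lintegral_const_mul' _ _ ofReal_ne_top
    _ ≤ w * katoM d α f ρ := by
        gcongr
        exact setLIntegral_ball_le_katoM z ρ

lemma setLIntegral_compl_ball_le_farFieldConst [NeZero d] (hα₀ : 0 ≤ α) (hαd : α ≤ d + 1)
    (hf : Measurable f) {s ρ : ℝ} (hs : 0 ≤ s) (hρ₀ : 0 < ρ) (hρ₁ : ρ ≤ 1)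
    (x : EuclideanSpace ℝ (Fin d)) :
    ∫⁻ y in (ball x ρ)ᶜ, ENNReal.ofReal (s / dist x y ^ ((d : ℝ) + α) * |f y|)
      ≤ ENNReal.ofReal s * farFieldConst d α ρ * katoM d α f ρ := by
  set c := (3 / ρ) ^ ((d : ℝ) + α) * ρ ^ ((d : ℝ) + 1 - α)
  set J := ∫⁻ w : EuclideanSpace ℝ (Fin d), ENNReal.ofReal ((1 + ‖w‖) ^ (-((d : ℝ) + α)))
  set V := volume (ball (0 : EuclideanSpace ℝ (Fin d)) ρ)
  set M := katoM d α f ρ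
  have hJ : ∫⁻ z, ENNReal.ofReal (s * c * (1 + dist x z) ^ (-((d : ℝ) + α)))
      = ENNReal.ofReal (s * c) * J := by
    simp_rw [ENNReal.ofReal_mul (by positivity : 0 ≤ s * c), dist_comm x, dist_eq_norm]
    rw [lintegral_const_mul' _ _ ofReal_ne_top,
      lintegral_sub_right_eq_self (fun u => ENNReal.ofReal ((1 + ‖u‖) ^ (-((d : ℝ) + α)))) x]
  -- average over the balls `ball z ρ`, each of which sees `f` only through `M`
  have hV : V * ∫⁻ y in (ball x ρ)ᶜ, ENNReal.ofReal (s / dist x y ^ ((d : ℝ) + α) * |f y|)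
      ≤ ENNReal.ofReal (s * c) * J * M :=
    calc V * ∫⁻ y in (ball x ρ)ᶜ, ENNReal.ofReal (s / dist x y ^ ((d : ℝ) + α) * |f y|)
        = ∫⁻ z, ∫⁻ y in ball z ρ ∩ (ball x ρ)ᶜ,
            ENNReal.ofReal (s / dist x y ^ ((d : ℝ) + α) * |f y|) :=
          measure_ball_mul_setLIntegral volume (by fun_prop) _ ρ
      _ ≤ ∫⁻ z, ENNReal.ofReal (s * c * (1 + dist x z) ^ (-((d : ℝ) + α))) * M :=
          lintegral_mono fun z =>
            setLIntegral_ball_inter_compl_ball_le_katoM hα₀ hαd hs hρ₁ x z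
      _ = ENNReal.ofReal (s * c) * J * M := by
          rw [lintegral_mul_const _ (by fun_prop), hJ]
  have hV₀ : V ≠ 0 := (measure_ball_pos volume _ hρ₀).ne'
  calc ∫⁻ y in (ball x ρ)ᶜ, ENNReal.ofReal (s / dist x y ^ ((d : ℝ) + α) * |f y|)
      = V⁻¹ * (V *
          ∫⁻ y in (ball x ρ)ᶜ, ENNReal.ofReal (s / dist x y ^ ((d : ℝ) + α) * |f y|)) :=
        (ENNReal.inv_mul_cancel_left hV₀ measure_ball_lt_top.ne).symm
    _ ≤ V⁻¹ * (ENNReal.ofReal (s * c) * J * M) := by gcongr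
    _ = ENNReal.ofReal s * farFieldConst d α ρ * M := by
        rw [farFieldConst, ENNReal.div_eq_inv_mul, ENNReal.ofReal_mul hs]
        ring

lemma lintegral_stableKernel_mul_le [NeZero d] (hα : 1 / 2 < α) (hαd : α ≤ d + 1)
    (hf : Measurable f) {s ρ : ℝ} (hs : 0 < s) (hρ₀ : 0 < ρ) (hρ₁ : ρ ≤ 1)
    (x : EuclideanSpace ℝ (Fin d)) :
    ∫⁻ y, ENNReal.ofReal (stableKernel d α s (dist x y) * |f y|)
      ≤ (ENNReal.ofReal (s ^ (1 / α - 1)) + ENNReal.ofReal s * farFieldConst d α ρ)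
          * katoM d α f ρ := by
  rw [← lintegral_add_compl _ (measurableSet_ball (x := x) (ε := ρ)), add_mul]
  gcongr ?_ + ?_
  · exact setLIntegral_ball_stableKernel_le hα hαd hs x ρ
  · calc ∫⁻ y in (ball x ρ)ᶜ, ENNReal.ofReal (stableKernel d α s (dist x y) * |f y|)
        ≤ ∫⁻ y in (ball x ρ)ᶜ, ENNReal.ofReal (s / dist x y ^ ((d : ℝ) + α) * |f y|) := by
          refine lintegral_mono fun y => ENNReal.ofReal_le_ofReal ?_
          gcongr
          exact min_le_right _ _
      _ ≤ ENNReal.ofReal s * farFieldConst d α ρ * katoM d α f ρ :=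
          setLIntegral_compl_ball_le_farFieldConst (by linarith) hαd hf hs.le hρ₀ hρ₁ x

end

lemma setLIntegral_Ioc_zero_one_rpow_ne_top {β : ℝ} (hβ : -1 < β) :
    ∫⁻ s in Ioc 0 1, ENNReal.ofReal (s ^ β) ≠ ∞ :=
  ((intervalIntegrable_iff_integrableOn_Ioc_of_le zero_le_one).1
    (intervalIntegral.intervalIntegrable_rpow' hβ)).setLIntegral_lt_top.ne

lemma tendsto_setLIntegral_Ioc_zero {h : ℝ → ℝ≥0∞} (h₁ : ∫⁻ s in Ioc 0 1, h s ≠ ∞) :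
    Tendsto (fun t => ∫⁻ s in Ioc 0 t, h s) (𝓝[>] 0) (𝓝 0) := by
  have hvol : Tendsto (fun t => volume (Ioc (0 : ℝ) t)) (𝓝[>] 0) (𝓝 0) := by
    simp_rw [Real.volume_Ioc, sub_zero]
    simpa using (ENNReal.continuous_ofReal.tendsto 0).mono_left nhdsWithin_le_nhds
  have hres : Tendsto (fun t => volume.restrict (Ioc 0 1) (Ioc (0 : ℝ) t)) (𝓝[>] 0) (𝓝 0) :=
    tendsto_of_tendsto_of_tendsto_of_le_of_le tendsto_const_nhds hvol (fun _ => bot_le)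
      fun _ => Measure.restrict_apply_le _ _
  refine (tendsto_setLIntegral_zero h₁ hres).congr' ?_
  filter_upwards [Ioc_mem_nhdsGT one_pos] with t ht
  rw [Measure.restrict_restrict measurableSet_Ioc, inter_eq_left.2 (Ioc_subset_Ioc_right ht.2)]

theorem kato_time_integral_tendsto_zero
    (d : ℕ) (hd : 2 ≤ d) (α : ℝ) (hα : α ∈ Set.Ioo (1 : ℝ) 2)
    (f : EuclideanSpace ℝ (Fin d) → ℝ) (hf : Measurable f) (hfK : KatoClass d α f) :
    Filter.Tendsto
      (fun t : ℝ => ⨆ x : EuclideanSpace ℝ (Fin d),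
        ∫⁻ s in Set.Ioc (0 : ℝ) t, ∫⁻ y,
          ENNReal.ofReal
            (min (s ^ (-(d : ℝ) / α)) (s / dist x y ^ ((d : ℝ) + α)) * |f y|)
          ∂volume ∂volume)
      (nhdsWithin 0 (Set.Ioi 0)) (nhds 0) := by
  obtain ⟨hα₁, hα₂⟩ := hα
  have : NeZero d := ⟨by omega⟩
  have hαd : α ≤ d + 1 := by linarith [show (1 : ℝ) ≤ d by exact_mod_cast (by omega : 1 ≤ d)]
  obtain ⟨ρ, hM, hρ₀, hρ₁⟩ : ∃ ρ, katoM d α f ρ ≠ ∞ ∧ ρ ∈ Ioc 0 1 :=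
    ((ENNReal.tendsto_nhds_zero.1 hfK 1 one_pos).and (Ioc_mem_nhdsGT one_pos)).exists.imp
      fun ρ h => ⟨(h.1.trans_lt one_lt_top).ne, h.2⟩
  set K := farFieldConst d α ρ
  have hK : K ≠ ∞ := farFieldConst_ne_top (by linarith) hρ₀
  set bound : ℝ → ℝ≥0∞ := fun s =>
    (ENNReal.ofReal (s ^ (1 / α - 1)) + ENNReal.ofReal s * K) * katoM d α f ρ
  have hbound_int : ∫⁻ s in Ioc 0 1, bound s ≠ ∞ := by
    rw [lintegral_mul_const' _ _ hM, lintegral_add_left (by fun_prop), lintegral_mul_const' _ _ hK]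
    refine ENNReal.mul_ne_top (ENNReal.add_ne_top.2 ⟨?_, ENNReal.mul_ne_top ?_ hK⟩) hM
    · exact setLIntegral_Ioc_zero_one_rpow_ne_top
        (by linarith [one_div_pos.2 (zero_lt_one.trans hα₁)])
    · simpa using setLIntegral_Ioc_zero_one_rpow_ne_top (β := 1) (by norm_num)
  refine tendsto_of_tendsto_of_tendsto_of_le_of_le tendsto_const_nhds
    (tendsto_setLIntegral_Ioc_zero hbound_int) (fun _ => bot_le) fun t => iSup_le fun x => ?_
  exact setLIntegral_mono' measurableSet_Ioc fun s hs =>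
    lintegral_stableKernel_mul_le (by linarith) hαd hf hs.1 hρ₀ hρ₁ x
end

section
/- Let d ≥ 2 be an integer and α ∈ (1, 2). There exists a constant C > 0, depending only on d and α, such that for every nonempty bounded open set D ⊂ ℝ^d and all pairwise distinct x, y, z ∈ D, g_D(x,z) · g_D(z,y) / ( min( |z-y|, δ_D(z) ) ) ≤ C · g_D(x,y) · ( |x-z|^{-(d+1-α)} + |z-y|^{-(d+1-α)} ), where g_D(u,v) = |u-v|^{-(d-α)} · ( min( 1, δ_D(u) δ_D(v) / |u-v|² ) )^{α/2}. -/
open MeasureTheory Metric Set Filter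

/-- `g_D(x,y) = |x-y|^{-(d-α)} (min(1, δ_D(x)δ_D(y)/|x-y|²))^{α/2}`, comparable to the
Green function of the killed symmetric `α`-stable process in a bounded `C^{1,1}` open set. -/
noncomputable def greenG (d : ℕ) (α : ℝ) (D : Set (EuclideanSpace ℝ (Fin d)))
    (x y : EuclideanSpace ℝ (Fin d)) : ℝ :=
  (min 1 (Metric.infDist x Dᶜ * Metric.infDist y Dᶜ / dist x y ^ 2)) ^ (α / 2)
    / dist x y ^ ((d : ℝ) - α)

/-!
Write `s = |x - z|`, `t = |z - y|`, `r = |x - y|`, `φ u = min 1 u`, `γ = α / 2`, `N = d - α`,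
and let `δ` be the (1-Lipschitz) distance to `Dᶜ`. The estimate splits into a boundary part and
a distance part. For the boundary part, `φ (a b / ρ²)` is comparable to `φ (a / ρ) φ (b / ρ)`
when `|a - b| ≤ ρ`, and `ρ φ (δ / ρ) = min ρ δ` is increasing in `ρ`; this moves the one-point
factors between the scales `s`, `t`, `r` at the cost of a ratio of scales, which `γ ≥ 1/2`
absorbs together with the extra factor `min t δ(z)`. The distance part only uses
`r ≤ s + t ≤ 2 max s t`.
-/

open Real

theorem min_one_mul_min_one_le {a b : ℝ} (ha : 0 ≤ a) (hb : 0 ≤ b) :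
    min 1 a * min 1 b ≤ min 1 (a * b) :=
  le_min (mul_le_one₀ (min_le_left _ _) (le_min zero_le_one hb) (min_le_left _ _))
    (mul_le_mul (min_le_right _ _) (min_le_right _ _) (le_min zero_le_one hb) ha)

theorem min_one_mul_le_two_mul {a b : ℝ} (ha : 0 ≤ a) (hb : 0 ≤ b) (hab : a ≤ b + 1)
    (hba : b ≤ a + 1) : min 1 (a * b) ≤ 2 * (min 1 a * min 1 b) := by
  rcases le_total a 1 with ha1 | ha1 <;> rcases le_total b 1 with hb1 | hb1 <;>
    simp only [ha1, hb1, min_eq_left, min_eq_right] <;>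
    nlinarith [min_le_left 1 (a * b), min_le_right 1 (a * b)]

theorem mul_min_one_div (u : ℝ) {t : ℝ} (ht : 0 < t) : t * min 1 (u / t) = min t u := by
  rw [mul_min_of_nonneg _ _ ht.le, mul_one, mul_div_cancel₀ _ ht.ne']

theorem mul_min_one_div_le_mul_min_one_div (u : ℝ) {s t : ℝ} (hs : 0 < s) (hst : s ≤ t) :
    s * min 1 (u / s) ≤ t * min 1 (u / t) := by
  rw [mul_min_one_div u hs, mul_min_one_div u (hs.trans_le hst)]
  exact min_le_min_right u hst

theorem min_one_div_le_two_mul {u ρ r : ℝ} (hu : 0 ≤ u) (hr : 0 < r) (h : r ≤ 2 * ρ) :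
    min 1 (u / ρ) ≤ 2 * min 1 (u / r) := by
  have hdiv : u / ρ ≤ 2 * (u / r) :=
    calc u / ρ ≤ u / (r / 2) := div_le_div_of_nonneg_left hu (by positivity) (by linarith)
      _ = 2 * (u / r) := by ring
  calc min 1 (u / ρ) ≤ min 2 (2 * (u / r)) := min_le_min one_le_two hdiv
    _ = 2 * min 1 (u / r) := by rw [mul_min_of_nonneg _ _ zero_le_two, mul_one]

theorem rpow_le_two_mul_rpow {a b γ : ℝ} (ha : 0 ≤ a) (hb : 0 ≤ b) (hγ0 : 0 ≤ γ) (hγ1 : γ ≤ 1)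
    (h : a ≤ 2 * b) : a ^ γ ≤ 2 * b ^ γ :=
  calc a ^ γ ≤ (2 * b) ^ γ := rpow_le_rpow ha h hγ0
    _ = 2 ^ γ * b ^ γ := mul_rpow zero_le_two hb
    _ ≤ 2 * b ^ γ := by
      gcongr
      simpa using rpow_le_rpow_of_exponent_le one_le_two hγ1

theorem rpow_mul_rpow_le_of_le_mul {a b k γ : ℝ} (ha : 0 ≤ a) (ha1 : a ≤ 1) (hb : 0 ≤ b)
    (hk : 0 ≤ k) (hab : a ≤ k * b) (hγ : γ ∈ Icc (1 / 2 : ℝ) 1) :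
    a ^ γ * b ^ γ ≤ k ^ (1 - γ) * b := by
  obtain ⟨hγ0, hγ1⟩ := hγ
  calc a ^ γ * b ^ γ ≤ (k * b) ^ (1 - γ) * b ^ γ := by
        gcongr
        exact (rpow_le_rpow_of_exponent_ge' ha ha1 (by linarith) (by linarith)).trans
          (rpow_le_rpow ha hab (by linarith))
    _ = k ^ (1 - γ) * b := by
        rw [mul_rpow hk hb, mul_assoc, ← rpow_add' hb (by norm_num), sub_add_cancel, rpow_one]

theorem rpow_min_one_mul_le {u v ρ γ : ℝ} (hu : 0 ≤ u) (hv : 0 ≤ v) (hρ : 0 < ρ) (hγ : 0 ≤ γ) :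
    min 1 (u / ρ) ^ γ * min 1 (v / ρ) ^ γ ≤ min 1 (u * v / ρ ^ 2) ^ γ := by
  rw [← mul_rpow (by positivity) (by positivity), show u * v / ρ ^ 2 = u / ρ * (v / ρ) by ring]
  exact rpow_le_rpow (by positivity) (min_one_mul_min_one_le (by positivity) (by positivity)) hγ

theorem rpow_min_one_mul_div_sq_le {u v ρ γ : ℝ} (hu : 0 ≤ u) (hv : 0 ≤ v) (hρ : 0 < ρ)
    (huv : |u - v| ≤ ρ) (hγ0 : 0 ≤ γ) (hγ1 : γ ≤ 1) :
    min 1 (u * v / ρ ^ 2) ^ γ ≤ 2 * (min 1 (u / ρ) ^ γ * min 1 (v / ρ) ^ γ) := by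
  rw [← mul_rpow (by positivity) (by positivity), show u * v / ρ ^ 2 = u / ρ * (v / ρ) by ring]
  have hsub : |u / ρ - v / ρ| ≤ 1 := by
    rwa [← sub_div, abs_div, abs_of_pos hρ, div_le_one hρ]
  obtain ⟨h1, h2⟩ := abs_sub_le_iff.1 hsub
  exact rpow_le_two_mul_rpow (by positivity) (by positivity) hγ0 hγ1
    (min_one_mul_le_two_mul (by positivity) (by positivity) (by linarith) (by linarith))

theorem rpow_min_one_div_le_two_mul {u ρ r γ : ℝ} (hu : 0 ≤ u) (hr : 0 < r) (h : r ≤ 2 * ρ)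
    (hγ0 : 0 ≤ γ) (hγ1 : γ ≤ 1) : min 1 (u / ρ) ^ γ ≤ 2 * min 1 (u / r) ^ γ := by
  have hρ : 0 < ρ := by linarith
  exact rpow_le_two_mul_rpow (by positivity) (by positivity) hγ0 hγ1
    (min_one_div_le_two_mul hu hr h)

theorem boundary_factors_le_of_le {γ s t dy dz : ℝ} (hγ : γ ∈ Icc (1 / 2 : ℝ) 1) (ht : 0 < t)
    (hts : t ≤ s) (hdy : 0 ≤ dy) (hdz : 0 ≤ dz) (hzy : dz ≤ dy + t) :
    t * (min 1 (dz / s) ^ γ * min 1 (dz / t) ^ γ * min 1 (dy / t) ^ γ)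
      ≤ 2 * min 1 (dy / s) ^ γ * min t dz := by
  have hs : 0 < s := ht.trans_le hts
  have hγ0 : 0 ≤ γ := by linarith [hγ.1]
  have hmono : t / s * min 1 (dy / t) ≤ min 1 (dy / s) := by
    rw [div_mul_eq_mul_div, div_le_iff₀ hs, mul_comm _ s]
    exact mul_min_one_div_le_mul_min_one_div dy ht hts
  rw [← mul_min_one_div dz ht]
  rcases le_total t dz with htz | hzt
  · have hzs : min 1 (dz / s) ≤ min 1 (dy / s) + t / s :=
      calc min 1 (dz / s) ≤ min (1 + t / s) (dy / s + t / s) :=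
            min_le_min (by linarith [div_pos ht hs]) (by rw [← add_div]; gcongr)
        _ = min 1 (dy / s) + t / s := min_add_add_right _ _ _
    have hprod : min 1 (dz / s) * min 1 (dy / t) ≤ 2 * min 1 (dy / s) := by
      nlinarith [mul_le_mul_of_nonneg_right hzs (by positivity : 0 ≤ min 1 (dy / t)),
        mul_le_mul_of_nonneg_left (min_le_left 1 (dy / t)) (by positivity : 0 ≤ min 1 (dy / s))]
    rw [min_eq_left ((one_le_div ht).2 htz), one_rpow, mul_one, mul_one,
      ← mul_rpow (by positivity) (by positivity)]
    calc t * (min 1 (dz / s) * min 1 (dy / t)) ^ γ ≤ t * (2 * min 1 (dy / s) ^ γ) := by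
          gcongr
          exact rpow_le_two_mul_rpow (by positivity) (by positivity) hγ0 hγ.2 hprod
      _ = _ := by ring
  · have hzt' : min 1 (dz / t) = dz / t := min_eq_right ((div_le_one ht).2 hzt)
    have hzs : min 1 (dz / s) = t / s * min 1 (dz / t) := by
      rw [hzt', min_eq_right ((div_le_one hs).2 (hzt.trans hts))]
      field_simp
    have hsq := rpow_mul_rpow_le_of_le_mul (by positivity) (min_le_left 1 (dz / t))
      (by positivity) zero_le_one (one_mul _).ge hγ
    rw [one_rpow, one_mul] at hsq
    calc t * (min 1 (dz / s) ^ γ * min 1 (dz / t) ^ γ * min 1 (dy / t) ^ γ)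
        = t * ((t / s * min 1 (dy / t)) ^ γ * (min 1 (dz / t) ^ γ * min 1 (dz / t) ^ γ)) := by
          rw [hzs, mul_rpow (by positivity) (by positivity),
            mul_rpow (by positivity) (by positivity)]
          ring
      _ ≤ t * (min 1 (dy / s) ^ γ * min 1 (dz / t)) := by gcongr
      _ ≤ 2 * min 1 (dy / s) ^ γ * (t * min 1 (dz / t)) := by
          have : 0 ≤ t * (min 1 (dy / s) ^ γ * min 1 (dz / t)) := by positivity
          linarith

theorem boundary_factors_le_of_ge {γ s t dx dz : ℝ} (hγ : γ ∈ Icc (1 / 2 : ℝ) 1) (hs : 0 < s)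
    (hst : s ≤ t) (hdx : 0 ≤ dx) (hdz : 0 ≤ dz) :
    s * (min 1 (dx / s) ^ γ * min 1 (dz / s) ^ γ * min 1 (dz / t) ^ γ)
      ≤ min 1 (dx / t) ^ γ * min t dz := by
  have ht : 0 < t := hs.trans_le hst
  have hγ0 : 0 ≤ γ := by linarith [hγ.1]
  have hmono (u : ℝ) : min 1 (u / s) ≤ t / s * min 1 (u / t) := by
    rw [div_mul_eq_mul_div, le_div_iff₀ hs, mul_comm]
    exact mul_min_one_div_le_mul_min_one_div u hs hst
  have hz := rpow_mul_rpow_le_of_le_mul (by positivity) (min_le_left 1 (dz / s))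
    (by positivity) (by positivity) (hmono dz) hγ
  calc s * (min 1 (dx / s) ^ γ * min 1 (dz / s) ^ γ * min 1 (dz / t) ^ γ)
      = s * (min 1 (dx / s) ^ γ * (min 1 (dz / s) ^ γ * min 1 (dz / t) ^ γ)) := by ring
    _ ≤ s * ((t / s * min 1 (dx / t)) ^ γ * ((t / s) ^ (1 - γ) * min 1 (dz / t))) := by
        gcongr
        exact hmono dx
    _ = s * ((t / s) ^ γ * (t / s) ^ (1 - γ)) * min 1 (dx / t) ^ γ * min 1 (dz / t) := by
        rw [mul_rpow (by positivity) (by positivity)]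
        ring
    _ = min 1 (dx / t) ^ γ * min t dz := by
        rw [← rpow_add (by positivity), add_sub_cancel, rpow_one, mul_div_cancel₀ _ hs.ne',
          ← mul_min_one_div dz ht]
        ring

theorem boundary_factors_threeG {γ s t r dx dy dz : ℝ} (hγ : γ ∈ Icc (1 / 2 : ℝ) 1)
    (hs : 0 < s) (ht : 0 < t) (hr : 0 < r) (hdx : 0 ≤ dx) (hdy : 0 ≤ dy) (hdz : 0 ≤ dz)
    (hxz : |dx - dz| ≤ s) (hzy : |dz - dy| ≤ t) (hrst : r ≤ s + t) :
    min 1 (dx * dz / s ^ 2) ^ γ * min 1 (dz * dy / t ^ 2) ^ γ * min s t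
      ≤ 32 * min 1 (dx * dy / r ^ 2) ^ γ * min t dz := by
  obtain ⟨hγ0, hγ1⟩ : 0 ≤ γ ∧ γ ≤ 1 := ⟨by linarith [hγ.1], hγ.2⟩
  have hA := rpow_min_one_mul_div_sq_le hdx hdz hs hxz hγ0 hγ1
  have hB := rpow_min_one_mul_div_sq_le hdz hdy ht hzy hγ0 hγ1
  have hM := rpow_min_one_mul_le hdx hdy hr hγ0
  rcases le_total t s with hts | hst
  · have hx := rpow_min_one_div_le_two_mul (ρ := s) hdx hr (by linarith) hγ0 hγ1
    have hy := rpow_min_one_div_le_two_mul (ρ := s) hdy hr (by linarith) hγ0 hγ1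
    have hz := boundary_factors_le_of_le hγ ht hts hdy hdz (by linarith [(abs_sub_le_iff.1 hzy).1])
    rw [min_eq_right hts]
    calc min 1 (dx * dz / s ^ 2) ^ γ * min 1 (dz * dy / t ^ 2) ^ γ * t
        ≤ 2 * (min 1 (dx / s) ^ γ * min 1 (dz / s) ^ γ)
          * (2 * (min 1 (dz / t) ^ γ * min 1 (dy / t) ^ γ)) * t := by gcongr
      _ = 4 * min 1 (dx / s) ^ γ
          * (t * (min 1 (dz / s) ^ γ * min 1 (dz / t) ^ γ * min 1 (dy / t) ^ γ)) := by ring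
      _ ≤ 4 * (2 * min 1 (dx / r) ^ γ) * (2 * (2 * min 1 (dy / r) ^ γ) * min t dz) := by
          gcongr 4 * ?_ * ?_
          exact hz.trans (by gcongr)
      _ = 32 * (min 1 (dx / r) ^ γ * min 1 (dy / r) ^ γ) * min t dz := by ring
      _ ≤ 32 * min 1 (dx * dy / r ^ 2) ^ γ * min t dz := by gcongr
  · have hx := rpow_min_one_div_le_two_mul (ρ := t) hdx hr (by linarith) hγ0 hγ1
    have hy := rpow_min_one_div_le_two_mul (ρ := t) hdy hr (by linarith) hγ0 hγ1
    have hz := boundary_factors_le_of_ge hγ hs hst hdx hdz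
    rw [min_eq_left hst]
    calc min 1 (dx * dz / s ^ 2) ^ γ * min 1 (dz * dy / t ^ 2) ^ γ * s
        ≤ 2 * (min 1 (dx / s) ^ γ * min 1 (dz / s) ^ γ)
          * (2 * (min 1 (dz / t) ^ γ * min 1 (dy / t) ^ γ)) * s := by gcongr
      _ = 4 * (s * (min 1 (dx / s) ^ γ * min 1 (dz / s) ^ γ * min 1 (dz / t) ^ γ))
          * min 1 (dy / t) ^ γ := by ring
      _ ≤ 4 * ((2 * min 1 (dx / r) ^ γ) * min t dz) * (2 * min 1 (dy / r) ^ γ) := by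
          gcongr 4 * ?_ * ?_
          exact hz.trans (by gcongr)
      _ = 16 * (min 1 (dx / r) ^ γ * min 1 (dy / r) ^ γ) * min t dz := by ring
      _ ≤ 32 * min 1 (dx * dy / r ^ 2) ^ γ * min t dz := by gcongr; norm_num

theorem distance_factors_threeG {N s t r : ℝ} (hN : 0 ≤ N) (hs : 0 < s) (ht : 0 < t)
    (hr : 0 < r) (hrst : r ≤ s + t) :
    (s ^ N * t ^ N * min s t)⁻¹ ≤ 2 ^ N / r ^ N * (s ^ (-(N + 1)) + t ^ (-(N + 1))) := by
  wlog hts : t ≤ s generalizing s t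
  · have := this ht hs (by linarith) (le_of_not_ge hts)
    rwa [mul_comm (t ^ N), min_comm, add_comm] at this
  have hrN : r ^ N ≤ 2 ^ N * s ^ N := by
    rw [← mul_rpow zero_le_two hs.le]
    exact rpow_le_rpow hr.le (by linarith) hN
  rw [min_eq_right hts]
  calc (s ^ N * t ^ N * t)⁻¹ = (s ^ N)⁻¹ * t ^ (-(N + 1)) := by
        rw [rpow_neg ht.le, rpow_add ht, rpow_one, mul_assoc, mul_inv]
    _ ≤ 2 ^ N / r ^ N * t ^ (-(N + 1)) := by
        gcongr
        rw [inv_eq_one_div, div_le_div_iff₀ (by positivity) (by positivity)]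
        linarith
    _ ≤ 2 ^ N / r ^ N * (s ^ (-(N + 1)) + t ^ (-(N + 1))) := by
        gcongr
        exact le_add_of_nonneg_left (by positivity)

theorem infDist_compl_pos {E : Type*} [NormedAddCommGroup E] [NormedSpace ℝ E] [Nontrivial E]
    {D : Set E} (hbdd : Bornology.IsBounded D) (hD : IsOpen D) {x : E} (hx : x ∈ D) :
    0 < infDist x Dᶜ := by
  have hne : Dᶜ.Nonempty :=
    nonempty_compl.2 fun h ↦ NormedSpace.unbounded_univ ℝ E (h ▸ hbdd)
  exact (hD.isClosed_compl.notMem_iff_infDist_pos hne).1 (not_not_intro hx)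

theorem abs_infDist_sub_infDist_le {E : Type*} [PseudoMetricSpace E] (s : Set E) (x y : E) :
    |infDist x s - infDist y s| ≤ dist x y := by
  simpa [Real.dist_eq] using (lipschitz_infDist_pt s).dist_le_mul x y

theorem greenG_mul_greenG_div_le {d : ℕ} {α : ℝ} (hα : α ∈ Icc (1 : ℝ) 2) (hαd : α ≤ d)
    {D : Set (EuclideanSpace ℝ (Fin d))} (hbdd : Bornology.IsBounded D) (hD : IsOpen D)
    {x y z : EuclideanSpace ℝ (Fin d)} (hz : z ∈ D) (hxy : x ≠ y) (hxz : x ≠ z) (hyz : y ≠ z) :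
    greenG d α D x z * greenG d α D z y / min (dist z y) (infDist z Dᶜ)
      ≤ 32 * 2 ^ ((d : ℝ) - α) * greenG d α D x y
        * (dist x z ^ (-((d : ℝ) + 1 - α)) + dist z y ^ (-((d : ℝ) + 1 - α))) := by
  obtain ⟨hα1, hα2⟩ := hα
  have : Nonempty (Fin d) := ⟨⟨0, by exact_mod_cast (zero_lt_one.trans_le (hα1.trans hαd))⟩⟩
  have hs : 0 < dist x z := dist_pos.2 hxz
  have ht : 0 < dist z y := dist_pos.2 hyz.symm
  have hr : 0 < dist x y := dist_pos.2 hxy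
  have hmin : 0 < min (dist z y) (infDist z Dᶜ) := lt_min ht (infDist_compl_pos hbdd hD hz)
  have hnum := boundary_factors_threeG (γ := α / 2) ⟨by linarith, by linarith⟩ hs ht hr
    infDist_nonneg infDist_nonneg infDist_nonneg (abs_infDist_sub_infDist_le Dᶜ x z)
    (abs_infDist_sub_infDist_le Dᶜ z y) (dist_triangle x z y)
  rw [← div_le_iff₀ hmin] at hnum
  have hdist := distance_factors_threeG (N := d - α) (by linarith) hs ht hr (dist_triangle x z y)
  rw [show -((d : ℝ) + 1 - α) = -((d - α) + 1) by ring]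
  simp only [greenG]
  set N := (d : ℝ) - α
  set M := min 1 (infDist x Dᶜ * infDist y Dᶜ / dist x y ^ 2) ^ (α / 2)
  have hM : 0 ≤ M := rpow_nonneg
    (le_min zero_le_one (div_nonneg (mul_nonneg infDist_nonneg infDist_nonneg) (by positivity))) _
  calc _ = (min 1 (infDist x Dᶜ * infDist z Dᶜ / dist x z ^ 2) ^ (α / 2)
          * min 1 (infDist z Dᶜ * infDist y Dᶜ / dist z y ^ 2) ^ (α / 2)
          * min (dist x z) (dist z y)) / min (dist z y) (infDist z Dᶜ)
          * (dist x z ^ N * dist z y ^ N * min (dist x z) (dist z y))⁻¹ := by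
        field_simp
    _ ≤ 32 * M * (2 ^ N / dist x y ^ N * (dist x z ^ (-(N + 1)) + dist z y ^ (-(N + 1)))) := by
        gcongr
    _ = _ := by ring

theorem threeG_estimate
    (d : ℕ) (hd : 2 ≤ d) (α : ℝ) (hα : α ∈ Set.Ioo (1 : ℝ) 2) :
    ∃ C : ℝ, 0 < C ∧
      ∀ (D : Set (EuclideanSpace ℝ (Fin d))),
        D.Nonempty → Bornology.IsBounded D → IsOpen D →
        ∀ x ∈ D, ∀ y ∈ D, ∀ z ∈ D, x ≠ y → x ≠ z → y ≠ z →
          greenG d α D x z * greenG d α D z y / min (dist z y) (Metric.infDist z Dᶜ)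
            ≤ C * greenG d α D x y
              * (dist x z ^ (-((d : ℝ) + 1 - α)) + dist z y ^ (-((d : ℝ) + 1 - α))) := by
  obtain ⟨hα1, hα2⟩ := hα
  have hαd : α ≤ d := by
    have : (2 : ℝ) ≤ d := by exact_mod_cast hd
    linarith
  exact ⟨32 * 2 ^ ((d : ℝ) - α), by positivity, fun D _ hbdd hD x _ y _ z hz hxy hxz hyz ↦
    greenG_mul_greenG_div_le ⟨hα1.le, hα2.le⟩ hαd hbdd hD hz hxy hxz hyz⟩
end
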